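/- arXiv:cs/0507048 — 3 statements merged into one kernel-verified Lean document; each statement's English description precedes it below -/
import Mathlib

section
/- A clause γ ∈ Π is CIRC-redundant in Π if and only if for every model M of (Π \ {γ}) ∪ ¬γ there exists a model M' of Π \ {γ} with M' ⊊ M. -/
/-- A propositional clause: sets of positively and negatively occurring variables. -/
structure Clause (V : Type) where
  pos : Set V
  neg : Set V

/-- A model (set of variables assigned true) satisfies a clause. -/
def Clause.sat {V : Type} (M : Set V) (c : Clause V) : Prop :=
  (∃ x ∈ c.pos, x ∈ M) ∨ (∃ x ∈ c.neg, x ∉ M)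

/-- Models of a CNF formula (set of clauses). -/
def ModOf {V : Type} (F : Set (Clause V)) : Set (Set V) :=
  {M | ∀ c ∈ F, c.sat M}

/-- Minimal models of a formula, w.r.t. set inclusion. -/
def CIRC {V : Type} (F : Set (Clause V)) : Set (Set V) :=
  {M | M ∈ ModOf F ∧ ¬ ∃ M' ∈ ModOf F, M' ⊂ M}

/-- The formula ¬γ: the set of unit clauses negating each literal of γ. -/
def negOf {V : Type} (γ : Clause V) : Set (Clause V) :=
  (fun x => (⟨∅, {x}⟩ : Clause V)) '' γ.pos ∪ (fun x => (⟨{x}, ∅⟩ : Clause V)) '' γ.neg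

/-!
The models of `F` are those models of `F \ {γ}` that satisfy `γ`. Since `Set V` is finite, every
model of `F \ {γ}` lies above a minimal one, so the two formulas have the same minimal models exactly
when every minimal model of `F \ {γ}` satisfies `γ`, i.e. when no model of `(F \ {γ}) ∪ ¬γ` is
minimal for `F \ {γ}`.
-/

theorem setOf_minimal_eq_iff_subset {α : Type*} [Preorder α] [WellFoundedLT α] {s t : Set α}
    (hst : s ⊆ t) :
    {x | Minimal (· ∈ t) x} = {x | Minimal (· ∈ s) x} ↔ {x | Minimal (· ∈ t) x} ⊆ s := by
  refine ⟨fun h x hx => ?_, fun h => Set.ext fun x => ⟨fun hx => hx.mono hst (h hx), fun hx => ?_⟩⟩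
  · rw [h] at hx
    exact hx.prop
  · refine minimal_iff_forall_lt.2 ⟨hst hx.prop, fun y hyx hy => ?_⟩
    obtain ⟨z, hzy, hz⟩ := exists_minimal_le_of_wellFoundedLT (· ∈ t) y hy
    exact hx.not_lt (h hz) (hzy.trans_lt hyx)

variable {V : Type}

theorem modOf_anti {A B : Set (Clause V)} (h : A ⊆ B) : ModOf B ⊆ ModOf A :=
  fun _ hM c hc => hM c (h hc)

theorem CIRC_eq_setOf_minimal (F : Set (Clause V)) :
    CIRC F = {M | Minimal (· ∈ ModOf F) M} := by
  ext M
  simp only [CIRC, Set.minimal_iff_forall_ssubset, Set.mem_ofPred_eq, not_exists, not_and]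
  exact and_congr_right fun _ => ⟨fun h _ hM' hM => h _ hM hM', fun h _ hM hM' => h hM' hM⟩

theorem mem_modOf_insert {F : Set (Clause V)} {c : Clause V} {M : Set V} :
    M ∈ ModOf (insert c F) ↔ c.sat M ∧ M ∈ ModOf F :=
  Set.forall_mem_insert

theorem mem_modOf_iff_of_mem {F : Set (Clause V)} {γ : Clause V} (hγ : γ ∈ F) {M : Set V} :
    M ∈ ModOf F ↔ γ.sat M ∧ M ∈ ModOf (F \ {γ}) := by
  rw [← mem_modOf_insert, Set.insert_sdiff_singleton, Set.insert_eq_of_mem hγ]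

theorem mem_modOf_union {A B : Set (Clause V)} {M : Set V} :
    M ∈ ModOf (A ∪ B) ↔ M ∈ ModOf A ∧ M ∈ ModOf B := by
  simp only [ModOf, Set.mem_ofPred_eq, Set.mem_union, or_imp, forall_and]

theorem mem_modOf_negOf {γ : Clause V} {M : Set V} : M ∈ ModOf (negOf γ) ↔ ¬ γ.sat M := by
  simp [ModOf, negOf, Clause.sat, or_imp, forall_and]

theorem CIRC_diff_subset_modOf_iff {F : Set (Clause V)} {γ : Clause V} (hγ : γ ∈ F) :
    CIRC (F \ {γ}) ⊆ ModOf F ↔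
      ∀ M ∈ ModOf ((F \ {γ}) ∪ negOf γ), ∃ M' ∈ ModOf (F \ {γ}), M' ⊂ M := by
  simp only [Set.subset_def, CIRC, Set.mem_ofPred_eq, mem_modOf_union, mem_modOf_negOf,
    mem_modOf_iff_of_mem hγ, and_imp]
  exact forall₂_congr fun M hM => by rw [and_iff_left hM, not_imp_comm]

theorem circ_redundant_iff_contains_model'_general {V : Type} [Fintype V]
    (F : Set (Clause V)) (γ : Clause V) (hγ : γ ∈ F) :
    CIRC (F \ {γ}) = CIRC F ↔
      ∀ M ∈ ModOf ((F \ {γ}) ∪ negOf γ), ∃ M' ∈ ModOf (F \ {γ}), M' ⊂ M := by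
  rw [← CIRC_diff_subset_modOf_iff hγ, CIRC_eq_setOf_minimal, CIRC_eq_setOf_minimal]
  exact setOf_minimal_eq_iff_subset (modOf_anti Set.sdiff_subset)

theorem circ_redundant_iff_contains_model' {V : Type} [Fintype V]
    (F : Set (Clause V)) (hfin : F.Finite) (γ : Clause V) (hγ : γ ∈ F) :
    CIRC (F \ {γ}) = CIRC F ↔
      ∀ M ∈ ModOf ((F \ {γ}) ∪ negOf γ), ∃ M' ∈ ModOf (F \ {γ}), M' ⊂ M :=
  circ_redundant_iff_contains_model'_general F γ hγ
end

section
/- For monotone entailment: if W' ⊆ W and every extension of the default theory ⟨D,W'⟩ entails W (i.e., W' ⊨_D W), then every selected process of ⟨D,W'⟩ is a selected process of ⟨D,W⟩; consequently Ext_D(W') ⊆ Ext_D(W) (faithful entailment). -/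
/-- A default rule, represented semantically: precondition, justification and
consequence are given by their sets of models. -/
structure Default (V : Type) where
  prec : Set (Set V)
  just : Set (Set V)
  cons : Set (Set V)

/-- Models of the conjunction of the consequences of a sequence of defaults. -/
def consSet {V : Type} (p : List (Default V)) : Set (Set V) :=
  {M | ∀ d ∈ p, M ∈ d.cons}

/-- Models of the conjunction of the justifications of a sequence of defaults. -/
def justSet {V : Type} (p : List (Default V)) : Set (Set V) :=
  {M | ∀ d ∈ p, M ∈ d.just}

/-- A process of ⟨D,W⟩: a duplicate-free sequence of defaults of D such that the
precondition of each default is entailed by W together with the consequences of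
the preceding defaults. -/
def IsProcess {V : Type} (D : Set (Default V)) (W : Set (Clause V))
    (p : List (Default V)) : Prop :=
  p.Nodup ∧ (∀ d ∈ p, d ∈ D) ∧
  ∀ (i : ℕ) (h : i < p.length),
    ModOf W ∩ consSet (p.take i) ⊆ (p.get ⟨i, h⟩).prec

/-- Success: W ∪ cons(p) is consistent with the justification of each default of p. -/
def Successful {V : Type} (W : Set (Clause V)) (p : List (Default V)) : Prop :=
  ∀ d ∈ p, (ModOf W ∩ consSet p ∩ d.just).Nonempty

/-- Local applicability of a default in a process. -/
def LocallyApplicable {V : Type} (W : Set (Clause V)) (p : List (Default V))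
    (d : Default V) : Prop :=
  ModOf W ∩ consSet p ⊆ d.prec ∧ (ModOf W ∩ consSet p ∩ d.just).Nonempty

/-- Reiter semantics: selected processes. -/
def ReiterSelected {V : Type} (D : Set (Default V)) (W : Set (Clause V))
    (p : List (Default V)) : Prop :=
  IsProcess D W p ∧ Successful W p ∧
  ∀ d ∈ D, d ∉ p → ¬ LocallyApplicable W p d

/-- Extensions (as sets of models, i.e. up to logical equivalence) in Reiter semantics. -/
def ReiterExtensions {V : Type} (D : Set (Default V)) (W : Set (Clause V)) :
    Set (Set (Set V)) :=
  {E | ∃ p, ReiterSelected D W p ∧ E = ModOf W ∩ consSet p}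

/-!
Apart from the process condition, Reiter's conditions mention `W` only through the models of
`W ∪ cons(Π)`. If the extension of `Π` over `W'` entails `W` and `W' ⊆ W`, then `W ∪ cons(Π)` and
`W' ∪ cons(Π)` have the same models, while the process condition only gets easier when `W` grows.
-/

theorem ModOf_anti {V : Type} {W' W : Set (Clause V)} (h : W' ⊆ W) : ModOf W ⊆ ModOf W' :=
  fun _ hM c hc => hM c (h hc)

theorem IsProcess.of_ModOf_subset {V : Type} {D : Set (Default V)} {W' W : Set (Clause V)}
    {p : List (Default V)} (hmod : ModOf W ⊆ ModOf W') (hp : IsProcess D W' p) :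
    IsProcess D W p :=
  let ⟨hnd, hmem, hprec⟩ := hp
  ⟨hnd, hmem, fun i hi => (Set.inter_subset_inter_left _ hmod).trans (hprec i hi)⟩

theorem inter_consSet_eq_of_ModOf_subset {V : Type} {W' W : Set (Clause V)}
    {p : List (Default V)} (hmod : ModOf W ⊆ ModOf W')
    (hent : ModOf W' ∩ consSet p ⊆ ModOf W) :
    ModOf W ∩ consSet p = ModOf W' ∩ consSet p :=
  (Set.inter_subset_inter_left _ hmod).antisymm fun _ hM => ⟨hent hM, hM.2⟩

theorem ReiterSelected.of_inter_consSet_eq {V : Type} {D : Set (Default V)}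
    {W' W : Set (Clause V)} {p : List (Default V)} (hmod : ModOf W ⊆ ModOf W')
    (heq : ModOf W ∩ consSet p = ModOf W' ∩ consSet p) (hp : ReiterSelected D W' p) :
    ReiterSelected D W p := by
  obtain ⟨hproc, hsucc, hmax⟩ := hp
  refine ⟨hproc.of_ModOf_subset hmod, ?_, ?_⟩
  · simpa only [Successful, heq] using hsucc
  · simpa only [LocallyApplicable, heq] using hmax

theorem selected_process_monotone_general {V : Type} (D : Set (Default V))
    (W' W : Set (Clause V))
    (hsub : W' ⊆ W)
    (hent : ∀ E ∈ ReiterExtensions D W', E ⊆ ModOf W) :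
    (∀ p, ReiterSelected D W' p → ReiterSelected D W p) ∧
    ReiterExtensions D W' ⊆ ReiterExtensions D W := by
  have hmod : ModOf W ⊆ ModOf W' := ModOf_anti hsub
  have heq : ∀ p, ReiterSelected D W' p → ModOf W ∩ consSet p = ModOf W' ∩ consSet p :=
    fun p hp => inter_consSet_eq_of_ModOf_subset hmod (hent _ ⟨p, hp, rfl⟩)
  have hsel : ∀ p, ReiterSelected D W' p → ReiterSelected D W p :=
    fun p hp => hp.of_inter_consSet_eq hmod (heq p hp)
  refine ⟨hsel, ?_⟩
  rintro E ⟨p, hp, rfl⟩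
  exact ⟨p, hsel p hp, (heq p hp).symm⟩

theorem selected_process_monotone {V : Type} (D : Set (Default V))
    (W' W : Set (Clause V)) (hD : D.Finite) (hW : W.Finite)
    (hsub : W' ⊆ W)
    (hent : ∀ E ∈ ReiterExtensions D W', E ⊆ ModOf W) :
    (∀ p, ReiterSelected D W' p → ReiterSelected D W p) ∧
    ReiterExtensions D W' ⊆ ReiterExtensions D W :=
  selected_process_monotone_general D W' W hsub hent
end

section
/- If Π is a selected process of both ⟨D,W'⟩ and ⟨D,W⟩ generating the same extension in both, then Π is a selected process of every ⟨D,W''⟩ with W' ⊆ W'' ⊆ W and generates the same extension there. -/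
/-!
Every condition of Reiter selectedness except the process condition depends on the background
theory `W` only through the extension `ModOf W ∩ consSet p`, and the process condition is
monotone in `W`. Since `ModOf` is antitone, the extension for `W''` is squeezed between those
for `W` and `W'`, which coincide; so `p` inherits the process condition from `W'` and all the
other conditions from `W`.
-/

section Reiter

variable {V : Type}

theorem modOf_antitone : Antitone (ModOf (V := V)) :=
  fun _ _ hW _ hM c hc => hM c (hW hc)

theorem inter_eq_of_modOf_between {W' W'' W : Set (Clause V)} {S : Set (Set V)}
    (h1 : W' ⊆ W'') (h2 : W'' ⊆ W) (h : ModOf W' ∩ S = ModOf W ∩ S) :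
    ModOf W'' ∩ S = ModOf W ∩ S :=
  ((Set.inter_subset_inter_left S (modOf_antitone h1)).trans h.subset).antisymm
    (Set.inter_subset_inter_left S (modOf_antitone h2))

theorem IsProcess.mono {D : Set (Default V)} {W₁ W₂ : Set (Clause V)} {p : List (Default V)}
    (hp : IsProcess D W₁ p) (hW : W₁ ⊆ W₂) : IsProcess D W₂ p :=
  ⟨hp.1, hp.2.1, fun i hi =>
    (Set.inter_subset_inter_left _ (modOf_antitone hW)).trans (hp.2.2 i hi)⟩

theorem successful_congr {W₁ W₂ : Set (Clause V)} {p : List (Default V)}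
    (h : ModOf W₁ ∩ consSet p = ModOf W₂ ∩ consSet p) : Successful W₁ p ↔ Successful W₂ p := by
  simp only [Successful, h]

theorem locallyApplicable_congr {W₁ W₂ : Set (Clause V)} {p : List (Default V)}
    (h : ModOf W₁ ∩ consSet p = ModOf W₂ ∩ consSet p) (d : Default V) :
    LocallyApplicable W₁ p d ↔ LocallyApplicable W₂ p d := by
  simp only [LocallyApplicable, h]

theorem ReiterSelected.of_isProcess_of_extension_eq {D : Set (Default V)}
    {W₁ W₂ : Set (Clause V)} {p : List (Default V)} (hsel : ReiterSelected D W₁ p)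
    (hproc : IsProcess D W₂ p) (h : ModOf W₁ ∩ consSet p = ModOf W₂ ∩ consSet p) :
    ReiterSelected D W₂ p :=
  ⟨hproc, (successful_congr h).1 hsel.2.1, fun d hd hdp =>
    (locallyApplicable_congr h d).not.1 (hsel.2.2 d hd hdp)⟩

end Reiter

theorem process_median {V : Type} (D : Set (Default V))
    (W' W'' W : Set (Clause V)) (h1 : W' ⊆ W'') (h2 : W'' ⊆ W)
    (p : List (Default V))
    (hp' : ReiterSelected D W' p) (hp : ReiterSelected D W p)
    (hsame : ModOf W' ∩ consSet p = ModOf W ∩ consSet p) :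
    ReiterSelected D W'' p ∧
    ModOf W'' ∩ consSet p = ModOf W ∩ consSet p := by
  have hext : ModOf W'' ∩ consSet p = ModOf W ∩ consSet p :=
    inter_eq_of_modOf_between h1 h2 hsame
  exact ⟨hp.of_isProcess_of_extension_eq (hp'.1.mono h1) hext.symm, hext⟩
end
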